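/- Let Q be a connected loop-less quiver with m vertices and n arrows, and let c = n - m + 1 ≥ 0. Then the cycle type π of the vertex permutation ξ⁻_Q is a partition of m whose length ℓ(π) satisfies 0 ≤ c - (ℓ(π) - 1) and c ≡ ℓ(π) - 1 (mod 2). -/

import Mathlib

open Matrix Polynomial

/-- Incidence matrix of a quiver with vertex set `Fin m`, arrow set `Fin n`,
source map `s` and target map `t`: the column of arrow `i` is `e_{s i} - e_{t i}`. -/
def incMatrix {m n : ℕ} (s t : Fin n → Fin m) : Matrix (Fin m) (Fin n) ℤ :=
  Matrix.of fun v i => (if v = s i then (1 : ℤ) else 0) - (if v = t i then (1 : ℤ) else 0)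

/-- Connectedness of the underlying multigraph of the quiver `(s, t)`. -/
def QuiverConnected {m n : ℕ} (s t : Fin n → Fin m) : Prop :=
  ∀ v w : Fin m,
    Relation.ReflTransGen (fun a b => ∃ i : Fin n, (s i = a ∧ t i = b) ∨ (s i = b ∧ t i = a)) v w

/-- The endpoint of arrow `i` other than `v` (for a loop-less quiver). -/
def otherEnd {m n : ℕ} (s t : Fin n → Fin m) (i : Fin n) (v : Fin m) : Fin m :=
  if s i = v then t i else s i

/-- Iterate the minimally decreasing walk starting at `v`, using only arrows with
index `< b`, always crossing the maximal available arrow. Returns the final vertex. -/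
def xiAux {m n : ℕ} (s t : Fin n → Fin m) (b : ℕ) (v : Fin m) : Fin m :=
  if h : (Finset.univ.filter (fun i : Fin n => (s i = v ∨ t i = v) ∧ i.val < b)).Nonempty then
    xiAux s t
      ((Finset.univ.filter (fun i : Fin n => (s i = v ∨ t i = v) ∧ i.val < b)).max' h).val
      (otherEnd s t
        ((Finset.univ.filter (fun i : Fin n => (s i = v ∨ t i = v) ∧ i.val < b)).max' h) v)
  else v
termination_by b
decreasing_by
  exact (Finset.mem_filter.mp (Finset.max'_mem _ h)).2.2

/-- The permutation of vertices `ξ⁻` determined by structural minimally decreasing walks: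
`xiDown s t v` is the end vertex of the structural decreasing walk starting at `v`. -/
def xiDown {m n : ℕ} (s t : Fin n → Fin m) (v : Fin m) : Fin m :=
  xiAux s t n v

/-- Iterate the minimally increasing walk starting at `v`, using only arrows with
index `≥ b`, always crossing the minimal available arrow. Returns the final vertex. -/
def xiAuxUp {m n : ℕ} (s t : Fin n → Fin m) (b : ℕ) (v : Fin m) : Fin m :=
  if h : (Finset.univ.filter (fun i : Fin n => (s i = v ∨ t i = v) ∧ b ≤ i.val)).Nonempty then
    xiAuxUp s t
      (((Finset.univ.filter (fun i : Fin n => (s i = v ∨ t i = v) ∧ b ≤ i.val)).min' h).val + 1)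
      (otherEnd s t
        ((Finset.univ.filter (fun i : Fin n => (s i = v ∨ t i = v) ∧ b ≤ i.val)).min' h) v)
  else v
termination_by n - b
decreasing_by
  have h1 := (Finset.mem_filter.mp (Finset.min'_mem _ h)).2.2
  have h2 := ((Finset.univ.filter (fun i : Fin n => (s i = v ∨ t i = v) ∧ b ≤ i.val)).min' h).isLt
  omega

/-- The map `ξ⁺`: end vertex of the structural minimally increasing walk starting at `v`. -/
def xiUp {m n : ℕ} (s t : Fin n → Fin m) (v : Fin m) : Fin m :=
  xiAuxUp s t 0 v


/-- Source vertex of a walk-step `(i, ε)`: `s i` if traversed positively, else `t i`. -/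
def stepSrc {m n : ℕ} (s t : Fin n → Fin m) (p : Fin n × Bool) : Fin m :=
  if p.2 then s p.1 else t p.1

/-- Target vertex of a walk-step `(i, ε)`. -/
def stepTgt {m n : ℕ} (s t : Fin n → Fin m) (p : Fin n × Bool) : Fin m :=
  if p.2 then t p.1 else s p.1


/-!
Reading off the recursion, `ξ⁻_Q` is the product `(s₀ t₀)(s₁ t₁)⋯(s_{n-1} t_{n-1})` of the
transpositions along the arrows: a decreasing walk first crosses the largest arrow at its
start. Hence `sign ξ⁻_Q = (-1)^n`, while the sign of a permutation with `ℓ` cycles is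
`(-1)^(m - ℓ)`; this is the parity statement. Multiplying by one more transposition `(a b)`
raises the number of cycles by at most one, and lowers it by one when `a` and `b` lie in
different components of the graph of the earlier arrows (cycles stay inside components).
Induction on the arrows gives `ℓ + m ≤ n + 2 · #components`, i.e. `ℓ - 1 ≤ c` when `Q` is
connected.
-/

namespace Setoid

variable {α : Type*}

/-- The join of `r` with the relation `a ~ b`, in closed form. -/
def joinPair (r : Setoid α) (a b : α) : Setoid α where
  r x y := r x y ∨ (r x a ∧ r b y) ∨ (r x b ∧ r a y)
  iseqv := by
    refine ⟨fun x => .inl (r.refl x), ?_, ?_⟩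
    · rintro x y (h | ⟨hxa, hby⟩ | ⟨hxb, hay⟩)
      · exact .inl (r.symm h)
      · exact .inr (.inr ⟨r.symm hby, r.symm hxa⟩)
      · exact .inr (.inl ⟨r.symm hay, r.symm hxb⟩)
    · rintro x y z (h | ⟨hxa, hby⟩ | ⟨hxb, hay⟩) (h' | ⟨hya, hbz⟩ | ⟨hyb, haz⟩)
      · exact .inl (r.trans h h')
      · exact .inr (.inl ⟨r.trans h hya, hbz⟩)
      · exact .inr (.inr ⟨r.trans h hyb, haz⟩)
      · exact .inr (.inl ⟨hxa, r.trans hby h'⟩)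
      · exact .inl (r.trans hxa (r.trans (r.symm (r.trans hby hya)) hbz))
      · exact .inl (r.trans hxa haz)
      · exact .inr (.inr ⟨hxb, r.trans hay h'⟩)
      · exact .inl (r.trans hxb hbz)
      · exact .inl (r.trans hxb (r.trans (r.symm (r.trans hay hyb)) haz))

variable {r r' : Setoid α} {a b : α}

theorem le_joinPair : r ≤ r.joinPair a b := fun _ _ h => .inl h

theorem joinPair_rel : r.joinPair a b a b := .inr (.inl ⟨r.refl a, r.refl b⟩)

theorem joinPair_le (hr : r ≤ r') (hab : r' a b) : r.joinPair a b ≤ r' := by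
  rintro x y (h | ⟨hxa, hby⟩ | ⟨hxb, hay⟩)
  · exact hr h
  · exact r'.trans (hr hxa) (r'.trans hab (hr hby))
  · exact r'.trans (hr hxb) (r'.trans (r'.symm hab) (hr hay))

theorem joinPair_eq_self (hab : r a b) : r.joinPair a b = r :=
  le_antisymm (joinPair_le le_rfl hab) le_joinPair

theorem card_quotient_le_of_le [Finite α] (h : r ≤ r') :
    Nat.card (Quotient r') ≤ Nat.card (Quotient r) :=
  Nat.card_le_card_of_surjective (Quotient.map' id h) fun q => q.inductionOn fun x => ⟨⟦x⟧, rfl⟩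

theorem card_quotient_of_le_bot (h : r ≤ ⊥) : Nat.card (Quotient r) = Nat.card α :=
  (Nat.card_eq_of_bijective _ ⟨fun _ _ hxy => h (Quotient.exact hxy), Quotient.mk_surjective⟩).symm

theorem card_quotient_joinPair_add_one [Finite α] (hab : ¬ r a b) :
    Nat.card (Quotient (r.joinPair a b)) + 1 = Nat.card (Quotient r) := by
  classical
  let f : Quotient r → Option (Quotient (r.joinPair a b)) :=
    Quotient.lift (fun x => if r x b then none else some ⟦x⟧) fun x y hxy => by
      by_cases hxb : r x b
      · simp [hxb, r.trans (r.symm hxy) hxb]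
      · have hyb : ¬ r y b := fun hyb => hxb (r.trans hxy hyb)
        simp [hxb, hyb, Quotient.sound (le_joinPair hxy)]
  have hf : f.Bijective := by
    refine ⟨?_, ?_⟩
    · rintro ⟨x⟩ ⟨y⟩ hxy
      change (if r x b then none else some _) = (if r y b then none else some _) at hxy
      by_cases hxb : r x b <;> by_cases hyb : r y b <;> simp only [hxb, hyb, if_true, if_false,
        reduceCtorEq, Option.some_inj] at hxy
      · exact Quotient.sound (r.trans hxb (r.symm hyb))
      · rcases Quotient.exact hxy with h | ⟨hxa, hby⟩ | ⟨hxb', -⟩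
        · exact Quotient.sound h
        · exact absurd (r.symm hby) hyb
        · exact absurd hxb' hxb
    · rintro (_ | ⟨⟨x⟩⟩)
      · exact ⟨⟦b⟧, if_pos (r.refl b)⟩
      · by_cases hxb : r x b
        · refine ⟨⟦a⟧, (if_neg hab).trans ?_⟩
          exact congrArg some (Quotient.sound (.inr (.inl ⟨r.refl a, r.symm hxb⟩)))
        · exact ⟨⟦x⟧, if_neg hxb⟩
  rw [Nat.card_eq_of_bijective f hf, Finite.card_option]

end Setoid

namespace Equiv.Perm

open Setoid

variable {α : Type*}

theorem sameCycle_setoid_le {f : Perm α} {r : Setoid α} (h : ∀ x, r x (f x)) :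
    SameCycle.setoid f ≤ r := by
  rintro x _ ⟨k, rfl⟩
  induction k using Int.induction_on with
  | zero => exact r.refl x
  | succ k ih => rw [add_comm, _root_.zpow_add, zpow_one, mul_apply]; exact r.trans ih (h _)
  | pred k ih =>
    rw [show -(k : ℤ) - 1 = -1 + -k by ring, _root_.zpow_add, _root_.zpow_neg_one, mul_apply]
    have hstep := h (f⁻¹ ((f ^ (-(k : ℤ))) x))
    rw [Perm.inv_def, apply_symm_apply] at hstep
    exact r.trans ih (r.symm hstep)

theorem sameCycle_setoid_one : SameCycle.setoid (1 : Perm α) = ⊥ :=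
  Setoid.ext fun _ _ => sameCycle_one

section Swap

variable [DecidableEq α]

theorem sameCycle_setoid_mul_swap_le (g : Perm α) (a b : α) :
    SameCycle.setoid (g * swap a b) ≤ (SameCycle.setoid g).joinPair a b := by
  refine sameCycle_setoid_le fun x => ?_
  rw [mul_apply]
  by_cases hxa : x = a
  · subst hxa
    rw [swap_apply_left]
    exact .inr (.inl ⟨SameCycle.refl g x, sameCycle_apply_right.2 (SameCycle.refl g b)⟩)
  by_cases hxb : x = b
  · subst hxb
    rw [swap_apply_right]
    exact .inr (.inr ⟨SameCycle.refl g x, sameCycle_apply_right.2 (SameCycle.refl g a)⟩)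
  · rw [swap_apply_of_ne_of_ne hxa hxb]
    exact .inl (sameCycle_apply_right.2 (SameCycle.refl g x))

/-- The walk `a, g b, g² b, …` under `g * swap a b` runs through the `g`-cycle of `b`
until it first returns to `b`. -/
theorem sameCycle_mul_swap_of_not_sameCycle [Finite α] {g : Perm α} {a b : α}
    (hab : ¬ g.SameCycle a b) : (g * swap a b).SameCycle a b := by
  set τ := g * swap a b
  have walk : ∀ j : ℕ, τ.SameCycle a ((g ^ (j + 1)) b) ∨ τ.SameCycle a b := by
    intro j
    induction j with
    | zero =>
      left
      have : τ a = g b := by simp [τ]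
      rw [zero_add, pow_one, ← this, sameCycle_apply_right]
    | succ j ih =>
      set y := (g ^ (j + 1)) b
      by_cases hyb : y = b
      · exact .inr (ih.elim (fun h => hyb ▸ h) id)
      have hya : y ≠ a := fun hya =>
        hab (SameCycle.symm (hya ▸ sameCycle_pow_right.2 (SameCycle.refl g b)))
      have : τ y = (g ^ (j + 1 + 1)) b := by
        rw [pow_succ', mul_apply, mul_apply, swap_apply_of_ne_of_ne hya hyb]
      rw [← this, sameCycle_apply_right]
      exact ih
  obtain ⟨j, hj⟩ : ∃ j, j + 1 = orderOf g := ⟨orderOf g - 1, Nat.sub_add_cancel (orderOf_pos g)⟩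
  simpa [hj, pow_orderOf_eq_one] using walk j

theorem sameCycle_setoid_le_joinPair_mul_swap (g : Perm α) (a b : α) :
    SameCycle.setoid g ≤ (SameCycle.setoid (g * swap a b)).joinPair a b := by
  simpa only [mul_swap_mul_self] using sameCycle_setoid_mul_swap_le (g * swap a b) a b

variable [Finite α]

theorem card_quotient_sameCycle_mul_swap_le (g : Perm α) (a b : α) :
    Nat.card (Quotient (SameCycle.setoid (g * swap a b)))
      ≤ Nat.card (Quotient (SameCycle.setoid g)) + 1 := by
  have hg := sameCycle_setoid_le_joinPair_mul_swap g a b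
  by_cases hτ : (g * swap a b).SameCycle a b
  · rw [joinPair_eq_self (r := SameCycle.setoid _) hτ] at hg
    exact (card_quotient_le_of_le hg).trans (Nat.le_succ _)
  · rw [← card_quotient_joinPair_add_one hτ]
    exact Nat.add_le_add_right (card_quotient_le_of_le hg) 1

theorem card_quotient_sameCycle_mul_swap_add_one {g : Perm α} {a b : α}
    (hab : ¬ g.SameCycle a b) :
    Nat.card (Quotient (SameCycle.setoid (g * swap a b))) + 1
      = Nat.card (Quotient (SameCycle.setoid g)) := by
  have hτ : (g * swap a b).SameCycle a b := sameCycle_mul_swap_of_not_sameCycle hab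
  have hg := sameCycle_setoid_le_joinPair_mul_swap g a b
  rw [joinPair_eq_self (r := SameCycle.setoid _) hτ] at hg
  have hτg : SameCycle.setoid (g * swap a b) = (SameCycle.setoid g).joinPair a b :=
    le_antisymm (sameCycle_setoid_mul_swap_le g a b) (joinPair_le hg hτ)
  rw [hτg, card_quotient_joinPair_add_one hab]

end Swap

section Partition

variable [Fintype α] [DecidableEq α]

theorem card_quotient_sameCycle_setoid (σ : Perm α) :
    Nat.card (Quotient (SameCycle.setoid σ)) = σ.partition.parts.card := by
  let F : α → σ.cycleFactorsFinset ⊕ {x // x ∉ σ.support} := fun x =>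
    if hx : x ∈ σ.support then .inl ⟨σ.cycleOf x, cycleOf_mem_cycleFactorsFinset_iff.2 hx⟩
    else .inr ⟨x, hx⟩
  have hker : Setoid.ker F = SameCycle.setoid σ := by
    ext x y
    rw [Setoid.ker_def]
    change F x = F y ↔ σ.SameCycle x y
    have fixed_of_notMem {z} (hz : z ∉ σ.support) : Function.IsFixedPt σ z :=
      notMem_support.1 hz
    by_cases hx : x ∈ σ.support <;> by_cases hy : y ∈ σ.support <;>
      simp only [F, hx, hy, dite_true, dite_false, reduceCtorEq, false_iff, Sum.inl.injEq,
        Sum.inr.injEq, Subtype.mk.injEq]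
    · exact (sameCycle_iff_cycleOf_eq_of_mem_support hx hy).symm
    · exact fun h => hy (h.eq_of_right (fixed_of_notMem hy) ▸ hx)
    · exact fun h => hx ((h.eq_of_left (fixed_of_notMem hx)).symm ▸ hy)
    · exact ⟨fun h => h ▸ SameCycle.refl σ x, fun h => h.eq_of_left (fixed_of_notMem hx)⟩
  have hF : F.Surjective := by
    rintro (⟨c, hc⟩ | ⟨x, hx⟩)
    · obtain ⟨x, hx⟩ := (mem_cycleFactorsFinset_iff.1 hc).1.nonempty_support
      have hxσ : x ∈ σ.support := mem_cycleFactorsFinset_support_le hc hx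
      exact ⟨x, by simp only [F, hxσ, dite_true, cycle_is_cycleOf hx hc]⟩
    · exact ⟨x, by simp only [F, hx, dite_false]⟩
  rw [← hker, Nat.card_congr (Setoid.quotientKerEquivOfSurjective F hF), Nat.card_sum,
    Nat.card_eq_fintype_card, Nat.card_eq_fintype_card, Fintype.card_coe,
    Fintype.card_subtype_compl, Fintype.card_coe, parts_partition, Multiset.card_add,
    Multiset.card_replicate, cycleType_def, Multiset.card_map]
  rfl

theorem sign_eq_neg_one_pow_card_add_card_parts (σ : Perm α) :
    sign σ = (-1) ^ (Fintype.card α + σ.partition.parts.card) := by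
  obtain ⟨k, hk⟩ : ∃ k, Fintype.card α = σ.support.card + k :=
    ⟨_, (Nat.add_sub_cancel' (Finset.card_le_univ σ.support)).symm⟩
  rw [sign_of_cycleType, parts_partition, Multiset.card_add, Multiset.card_replicate, hk,
    Nat.add_sub_cancel_left, sum_cycleType,
    show σ.support.card + k + (Multiset.card σ.cycleType + k)
      = σ.support.card + Multiset.card σ.cycleType + 2 * k by ring, pow_add _ _ (2 * k), pow_mul]
  simp

end Partition

end Equiv.Perm

open Equiv Equiv.Perm Setoid

section Quiver

variable {V : Type*} {n : ℕ}

def quiverComponents (s t : Fin n → V) : Setoid V :=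
  Relation.EqvGen.setoid fun a b => ∃ i : Fin n, (s i = a ∧ t i = b) ∨ (s i = b ∧ t i = a)

theorem quiverComponents_eq_bot (s t : Fin 0 → V) : quiverComponents s t = ⊥ :=
  le_bot_iff.1 (eqvGen_le fun _ _ ⟨i, _⟩ => i.elim0)

theorem quiverComponents_succ (s t : Fin (n + 1) → V) :
    quiverComponents s t = (quiverComponents (s ∘ Fin.castSucc) (t ∘ Fin.castSucc)).joinPair
      (s (Fin.last n)) (t (Fin.last n)) := by
  refine le_antisymm (eqvGen_le fun x y ⟨i, hi⟩ => ?_) (joinPair_le ?_ ?_)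
  · induction i using Fin.lastCases with
    | last =>
      rcases hi with ⟨rfl, rfl⟩ | ⟨rfl, rfl⟩
      · exact joinPair_rel
      · exact (Setoid.joinPair _ _ _).symm joinPair_rel
    | cast i => exact le_joinPair (Relation.EqvGen.rel _ _ ⟨i, hi⟩)
  · exact eqvGen_mono fun x y ⟨i, hi⟩ => ⟨i.castSucc, hi⟩
  · exact Relation.EqvGen.rel _ _ ⟨Fin.last n, .inl ⟨rfl, rfl⟩⟩

variable [DecidableEq V]

def swapProduct (s t : Fin n → V) : Perm V :=
  (List.ofFn fun i => swap (s i) (t i)).prod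

theorem swapProduct_succ (s t : Fin (n + 1) → V) :
    swapProduct s t = swapProduct (s ∘ Fin.castSucc) (t ∘ Fin.castSucc)
      * swap (s (Fin.last n)) (t (Fin.last n)) := by
  rw [swapProduct, List.ofFn_succ', List.prod_concat]
  rfl

theorem sign_swapProduct [Fintype V] (s t : Fin n → V) (hloop : ∀ i, s i ≠ t i) :
    sign (swapProduct s t) = (-1) ^ n := by
  rw [swapProduct, sign_prod_list_swap, List.length_ofFn]
  simpa using fun i => swap_isSwap_iff.2 (hloop i)

theorem sameCycle_setoid_swapProduct_le (s t : Fin n → V) :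
    SameCycle.setoid (swapProduct s t) ≤ quiverComponents s t := by
  induction n with
  | zero =>
    rw [swapProduct, List.ofFn_zero, List.prod_nil, sameCycle_setoid_one]
    exact bot_le
  | succ n ih =>
    rw [swapProduct_succ, quiverComponents_succ]
    exact (sameCycle_setoid_mul_swap_le _ _ _).trans
      (joinPair_le ((ih _ _).trans le_joinPair) joinPair_rel)

theorem card_cycles_swapProduct_add_le [Finite V] (s t : Fin n → V) :
    Nat.card (Quotient (SameCycle.setoid (swapProduct s t))) + Nat.card V
      ≤ n + 2 * Nat.card (Quotient (quiverComponents s t)) := by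
  induction n with
  | zero =>
    rw [quiverComponents_eq_bot, card_quotient_of_le_bot le_rfl,
      swapProduct, List.ofFn_zero, List.prod_nil, sameCycle_setoid_one,
      card_quotient_of_le_bot le_rfl]
    omega
  | succ n ih =>
    have ih := ih (s ∘ Fin.castSucc) (t ∘ Fin.castSucc)
    rw [swapProduct_succ, quiverComponents_succ]
    set g := swapProduct (s ∘ Fin.castSucc) (t ∘ Fin.castSucc)
    set r := quiverComponents (s ∘ Fin.castSucc) (t ∘ Fin.castSucc)
    by_cases hr : r (s (Fin.last n)) (t (Fin.last n))
    · have hcycles := card_quotient_sameCycle_mul_swap_le g (s (Fin.last n)) (t (Fin.last n))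
      rw [joinPair_eq_self hr]
      omega
    · have hg : ¬ g.SameCycle (s (Fin.last n)) (t (Fin.last n)) :=
        fun h => hr (sameCycle_setoid_swapProduct_le _ _ h)
      have hcycles := card_quotient_sameCycle_mul_swap_add_one hg
      have hcomponents := card_quotient_joinPair_add_one hr
      omega

end Quiver

section XiDown

variable {m n : ℕ}

theorem xiAux_of_not_exists {s t : Fin n → Fin m} {b : ℕ} {v : Fin m}
    (h : ¬ ∃ i : Fin n, (s i = v ∨ t i = v) ∧ i.val < b) : xiAux s t b v = v := by
  rw [xiAux, dif_neg]
  rintro ⟨i, hi⟩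
  exact h ⟨i, by simpa using hi⟩

theorem xiAux_of_isGreatest {s t : Fin n → Fin m} {b : ℕ} {v : Fin m} {i : Fin n}
    (hi : IsGreatest {j : Fin n | (s j = v ∨ t j = v) ∧ j.val < b} i) :
    xiAux s t b v = xiAux s t i (otherEnd s t i v) := by
  have hmem : i ∈ Finset.univ.filter (fun j : Fin n => (s j = v ∨ t j = v) ∧ j.val < b) := by
    simpa using hi.1
  rw [xiAux, dif_pos ⟨i, hmem⟩,
    le_antisymm (Finset.max'_le _ _ _ fun j hj => hi.2 (by simpa using hj))
      (Finset.le_max' _ _ hmem)]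

theorem xiAux_eq_of_incident_iff {s t : Fin n → Fin m} {b b' : ℕ} {v : Fin m}
    (h : ∀ i : Fin n, (s i = v ∨ t i = v) → (i.val < b ↔ i.val < b')) :
    xiAux s t b v = xiAux s t b' v := by
  have hfilter : Finset.univ.filter (fun i : Fin n => (s i = v ∨ t i = v) ∧ i.val < b)
      = Finset.univ.filter (fun i : Fin n => (s i = v ∨ t i = v) ∧ i.val < b') := by
    ext i
    simp only [Finset.mem_filter, Finset.mem_univ, true_and]
    exact and_congr_right (h i)
  rw [xiAux, xiAux]
  simp only [hfilter]

theorem xiAux_castSucc (s t : Fin (n + 1) → Fin m) {b : ℕ} (hb : b ≤ n) (v : Fin m) :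
    xiAux s t b v = xiAux (s ∘ Fin.castSucc) (t ∘ Fin.castSucc) b v := by
  induction b using Nat.strong_induction_on generalizing v with
  | _ b ih =>
  have lift (i : Fin (n + 1)) (hi : i.val < b) : ∃ j : Fin n, j.castSucc = i :=
    ⟨i.castPred (Fin.val_ne_iff.1 (hi.trans_le hb).ne), Fin.castSucc_castPred _ _⟩
  by_cases hex : ∃ j : Fin n, (s j.castSucc = v ∨ t j.castSucc = v) ∧ j.val < b
  · obtain ⟨j, ⟨hjv, hjb⟩, hmax⟩ := Set.exists_max_image _ id (Set.toFinite _) hex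
    have hgreatest : IsGreatest {i : Fin (n + 1) | (s i = v ∨ t i = v) ∧ i.val < b}
        j.castSucc := by
      refine ⟨⟨hjv, hjb⟩, fun i ⟨hiv, hib⟩ => ?_⟩
      obtain ⟨k, rfl⟩ := lift i hib
      exact Fin.castSucc_le_castSucc_iff.2 (hmax k ⟨hiv, hib⟩)
    rw [xiAux_of_isGreatest hgreatest, xiAux_of_isGreatest (s := s ∘ Fin.castSucc)
      (t := t ∘ Fin.castSucc) ⟨⟨hjv, hjb⟩, fun k hk => hmax k hk⟩]
    exact ih _ hjb (hjb.le.trans hb) _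
  · rw [xiAux_of_not_exists (s := s ∘ Fin.castSucc) (t := t ∘ Fin.castSucc) hex,
      xiAux_of_not_exists]
    rintro ⟨i, hiv, hib⟩
    obtain ⟨j, rfl⟩ := lift i hib
    exact hex ⟨j, hiv, hib⟩

theorem otherEnd_eq_swap {s t : Fin n → Fin m} {i : Fin n} {v : Fin m}
    (hv : s i = v ∨ t i = v) : otherEnd s t i v = swap (s i) (t i) v := by
  unfold otherEnd
  split_ifs with hs
  · rw [← hs, swap_apply_left]
  · rw [← hv.resolve_left hs, swap_apply_right]

theorem xiAux_last (s t : Fin (n + 1) → Fin m) (v : Fin m) :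
    xiAux s t (n + 1) v = xiAux (s ∘ Fin.castSucc) (t ∘ Fin.castSucc) n
      (swap (s (Fin.last n)) (t (Fin.last n)) v) := by
  by_cases hv : s (Fin.last n) = v ∨ t (Fin.last n) = v
  · rw [xiAux_of_isGreatest ⟨⟨hv, (Fin.last n).isLt⟩, fun j _ => Fin.le_last j⟩, Fin.val_last,
      xiAux_castSucc s t le_rfl, otherEnd_eq_swap hv]
  · push Not at hv
    rw [swap_apply_of_ne_of_ne hv.1.symm hv.2.symm,
      xiAux_eq_of_incident_iff (b' := n) fun i hi => ?_, xiAux_castSucc s t le_rfl]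
    have := Fin.val_lt_last (show i ≠ Fin.last n by rintro rfl; tauto)
    omega

theorem xiDown_eq_swapProduct (s t : Fin n → Fin m) (v : Fin m) :
    xiDown s t v = swapProduct s t v := by
  induction n generalizing v with
  | zero =>
    rw [xiDown, xiAux_of_not_exists fun ⟨i, _⟩ => i.elim0, swapProduct, List.ofFn_zero,
      List.prod_nil, one_apply]
  | succ n ih => rw [xiDown, xiAux_last, ← xiDown, ih, swapProduct_succ, mul_apply]

end XiDown

/-- for a connected loop-less quiver with `m` vertices, `n` arrows and
corank `c = n - m + 1 ≥ 0`, the cycle type of `ξ⁻_Q` is a partition of `m` whose length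
`ℓ` satisfies `ℓ - 1 ≤ c` and `c ≡ ℓ - 1 (mod 2)`. -/
theorem cycleType_length_parity {m n : ℕ} (hm : 0 < m) (s t : Fin n → Fin m)
    (hloop : ∀ i : Fin n, s i ≠ t i) (hconn : QuiverConnected s t)
    (c : ℕ) (hc : c + m = n + 1)
    (σ : Equiv.Perm (Fin m)) (hσ : ∀ v : Fin m, σ v = xiDown s t v) :
    σ.partition.parts.card - 1 ≤ c
    ∧ c ≡ σ.partition.parts.card - 1 [MOD 2] := by
  obtain rfl : σ = swapProduct s t :=
    Equiv.ext fun v => (hσ v).trans (xiDown_eq_swapProduct s t v)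
  have hcomponents : Nat.card (Quotient (quiverComponents s t)) ≤ 1 :=
    Finite.card_le_one_iff_subsingleton.2 ⟨fun p q => p.inductionOn₂ q fun v w =>
      Quotient.sound (Relation.EqvGen.reflTransGen_le_eqvGen _ _ _ (hconn v w))⟩
  have hcycles := card_cycles_swapProduct_add_le s t
  rw [card_quotient_sameCycle_setoid, Nat.card_eq_fintype_card] at hcycles
  have hpos : 0 < (swapProduct s t).partition.parts.card := by
    rw [← card_quotient_sameCycle_setoid]
    have : Nonempty (Quotient (SameCycle.setoid (swapProduct s t))) := ⟨⟦⟨0, hm⟩⟧⟩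
    exact Nat.card_pos
  have hsign := (sign_swapProduct s t hloop).symm.trans
    (sign_eq_neg_one_pow_card_add_card_parts (swapProduct s t))
  obtain ⟨k, hk⟩ : Even (n + (Fintype.card (Fin m) + (swapProduct s t).partition.parts.card)) := by
    rw [← neg_one_pow_eq_one_iff_even (R := ℤˣ) (by decide), pow_add, hsign, ← pow_add,
      ← two_mul, pow_mul, neg_one_sq, one_pow]
  have hcard : Fintype.card (Fin m) = m := Fintype.card_fin m
  exact ⟨by omega, by unfold Nat.ModEq; omega⟩
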